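/- arXiv:2405.09189 — 2 statements merged into one kernel-verified Lean document; each statement's English description precedes it below -/
import Mathlib

section
/- Consider the regularized system ẋ^λ(t) = g_t^λ(x^λ(t)) with g_t^λ(x) = f(t,x) − (1/λ)(x − P_{S(t)}(x)), where f satisfies |f(t,x₁) − f(t,x₂)| ≤ L_f |x₁ − x₂| and |f(t,x)| ≤ L_f(1 + |x|), and S(t) are nonempty closed convex sets with d_H(S(t),S(s)) ≤ L_s|t−s|. Suppose |Y_λ(x^λ(t))| ≤ M and |Y_ν(x^ν(t))| ≤ M for all t ∈ [0,T], where Y_λ(x) = (1/λ)(x − P_{S(t)}(x)). If x^λ(0) = x^ν(0), then for all t ∈ [0,T]: |x^λ(t) − x^ν(t)|² ≤ M² (λ + ν) (e^{2 L_f t} − 1)/(2 L_f). -/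
open Set

open scoped RealInnerProductSpace

/-! The difference `D = x^λ - x^ν` satisfies `½ (‖D‖²)' = ⟪D, f(x^λ) - f(x^ν)⟫ - ⟪D, Y_λ - Y_ν⟫`.
The first term is at most `L_f ‖D‖²`. For the second, write `D = λ Y_λ - ν Y_ν + (P x^λ - P x^ν)`:
the projection part pairs nonnegatively with `Y_λ - Y_ν` (monotonicity of the Yosida
approximations, from the variational inequality of the projection), and
`⟪λ Y_λ - ν Y_ν, Y_λ - Y_ν⟫ ≥ -M² (λ + ν) / 2` by Young's inequality. Grönwall's lemma applied to
`‖D‖²' ≤ 2 L_f ‖D‖² + M² (λ + ν)` with `D 0 = 0` gives the bound. -/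

section Projection

variable {E : Type*} [NormedAddCommGroup E] [InnerProductSpace ℝ E] {K : Set E} {x y p q : E}

lemma inner_sub_nearest_nonpos (hK : Convex ℝ K) (hp : p ∈ K)
    (hpmin : ∀ w ∈ K, ‖x - p‖ ≤ ‖x - w‖) {w : E} (hw : w ∈ K) :
    ⟪x - p, w - p⟫ ≤ 0 := by
  have : Nonempty K := ⟨⟨p, hp⟩⟩
  refine (norm_eq_iInf_iff_real_inner_le_zero hK hp).1 (le_antisymm ?_ ?_) w hw
  · exact le_ciInf fun w => hpmin w w.2
  · exact ciInf_le (f := fun w : K => ‖x - w‖) ⟨0, by rintro _ ⟨w, rfl⟩; exact norm_nonneg _⟩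
      ⟨p, hp⟩

lemma inner_nearest_sub_smul_sub_nonneg (hK : Convex ℝ K)
    (hp : p ∈ K) (hpmin : ∀ w ∈ K, ‖x - p‖ ≤ ‖x - w‖)
    (hq : q ∈ K) (hqmin : ∀ w ∈ K, ‖y - q‖ ≤ ‖y - w‖) {c d : ℝ} (hc : 0 ≤ c) (hd : 0 ≤ d) :
    0 ≤ ⟪p - q, c • (x - p) - d • (y - q)⟫ := by
  have hx : 0 ≤ ⟪p - q, x - p⟫ := by
    rw [real_inner_comm, ← neg_sub q p, inner_neg_right, neg_nonneg]
    exact inner_sub_nearest_nonpos hK hp hpmin hq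
  have hy : ⟪p - q, y - q⟫ ≤ 0 := by
    rw [real_inner_comm]
    exact inner_sub_nearest_nonpos hK hq hqmin hp
  rw [inner_sub_right, real_inner_smul_right, real_inner_smul_right]
  nlinarith

end Projection

section Yosida

variable {E : Type*} [NormedAddCommGroup E] [InnerProductSpace ℝ E]

lemma neg_inner_smul_sub_smul_le {a b : E} {c d M : ℝ} (ha : ‖a‖ ≤ M) (hb : ‖b‖ ≤ M)
    (hc : 0 ≤ c) (hd : 0 ≤ d) :
    -⟪c • a - d • b, a - b⟫ ≤ M ^ 2 * (c + d) / 2 := by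
  have hexpand : ⟪c • a - d • b, a - b⟫ = c * ‖a‖ ^ 2 + d * ‖b‖ ^ 2 - (c + d) * ⟪a, b⟫ := by
    simp only [inner_sub_left, inner_sub_right, real_inner_smul_left, real_inner_self_eq_norm_sq,
      real_inner_comm a b]
    ring
  have hyoung : ⟪a, b⟫ ≤ (‖a‖ ^ 2 + ‖b‖ ^ 2) / 2 := by
    nlinarith [real_inner_le_norm a b, sq_nonneg (‖a‖ - ‖b‖)]
  have ha2 : ‖a‖ ^ 2 ≤ M ^ 2 := pow_le_pow_left₀ (norm_nonneg a) ha 2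
  have hb2 : ‖b‖ ^ 2 ≤ M ^ 2 := pow_le_pow_left₀ (norm_nonneg b) hb 2
  rw [hexpand]
  nlinarith [mul_le_mul_of_nonneg_left hyoung (add_nonneg hc hd),
    mul_le_mul_of_nonneg_left ha2 hd, mul_le_mul_of_nonneg_left hb2 hc]

lemma neg_inner_sub_yosida_sub_le {K : Set E} (hK : Convex ℝ K) {x y p q : E}
    (hp : p ∈ K) (hpmin : ∀ w ∈ K, ‖x - p‖ ≤ ‖x - w‖)
    (hq : q ∈ K) (hqmin : ∀ w ∈ K, ‖y - q‖ ≤ ‖y - w‖) {c d M : ℝ} (hc : 0 < c) (hd : 0 < d)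
    (hYx : ‖(1 / c) • (x - p)‖ ≤ M) (hYy : ‖(1 / d) • (y - q)‖ ≤ M) :
    -⟪x - y, (1 / c) • (x - p) - (1 / d) • (y - q)⟫ ≤ M ^ 2 * (c + d) / 2 := by
  set a := (1 / c) • (x - p)
  set b := (1 / d) • (y - q)
  have hdecomp : x - y = (c • a - d • b) + (p - q) := by
    simp only [a, b, smul_smul, mul_one_div_cancel hc.ne', mul_one_div_cancel hd.ne', one_smul]
    abel
  have hmono : 0 ≤ ⟪p - q, a - b⟫ :=
    inner_nearest_sub_smul_sub_nonneg hK hp hpmin hq hqmin (by positivity) (by positivity)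
  rw [hdecomp, inner_add_left]
  linarith [neg_inner_smul_sub_smul_le hYx hYy hc.le hd.le]

lemma inner_sub_regularized_field_sub_le {K : Set E} (hK : Convex ℝ K) {F : E → E} {L : ℝ}
    (hF : ∀ x y, ‖F x - F y‖ ≤ L * ‖x - y‖) {x y p q : E}
    (hp : p ∈ K) (hpmin : ∀ w ∈ K, ‖x - p‖ ≤ ‖x - w‖)
    (hq : q ∈ K) (hqmin : ∀ w ∈ K, ‖y - q‖ ≤ ‖y - w‖) {c d M : ℝ} (hc : 0 < c) (hd : 0 < d)
    (hYx : ‖(1 / c) • (x - p)‖ ≤ M) (hYy : ‖(1 / d) • (y - q)‖ ≤ M) :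
    2 * ⟪x - y, (F x - (1 / c) • (x - p)) - (F y - (1 / d) • (y - q))⟫
      ≤ 2 * L * ‖x - y‖ ^ 2 + M ^ 2 * (c + d) := by
  have hlip : ⟪x - y, F x - F y⟫ ≤ L * ‖x - y‖ ^ 2 :=
    calc ⟪x - y, F x - F y⟫ ≤ ‖x - y‖ * ‖F x - F y‖ := real_inner_le_norm _ _
      _ ≤ ‖x - y‖ * (L * ‖x - y‖) := mul_le_mul_of_nonneg_left (hF x y) (norm_nonneg _)
      _ = L * ‖x - y‖ ^ 2 := by ring
  have hsplit : (F x - (1 / c) • (x - p)) - (F y - (1 / d) • (y - q))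
      = (F x - F y) - ((1 / c) • (x - p) - (1 / d) • (y - q)) := by abel
  rw [hsplit, inner_sub_right]
  linarith [neg_inner_sub_yosida_sub_le hK hp hpmin hq hqmin hc hd hYx hYy]

end Yosida

lemma norm_sq_le_gronwallBound_of_inner_deriv_right_le {E : Type*} [NormedAddCommGroup E]
    [InnerProductSpace ℝ E] {u u' : ℝ → E} {δ K ε a b : ℝ} (hu : ContinuousOn u (Icc a b))
    (hu' : ∀ t ∈ Ico a b, HasDerivWithinAt u (u' t) (Ici t) t) (ha : ‖u a‖ ^ 2 ≤ δ)
    (bound : ∀ t ∈ Ico a b, 2 * ⟪u t, u' t⟫ ≤ K * ‖u t‖ ^ 2 + ε) :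
    ∀ t ∈ Icc a b, ‖u t‖ ^ 2 ≤ gronwallBound δ K ε (t - a) :=
  le_gronwallBound_of_liminf_deriv_right_le ((continuous_pow 2).comp_continuousOn hu.norm)
    (fun t ht _ hr => (hu' t ht).norm_sq.liminf_right_slope_le hr) ha bound

theorem regularized_trajectories_dist_general {n : ℕ}
    (T L_f : ℝ) (hLf : 0 < L_f)
    (f : ℝ → EuclideanSpace ℝ (Fin n) → EuclideanSpace ℝ (Fin n))
    (hf_lip : ∀ t x₁ x₂, ‖f t x₁ - f t x₂‖ ≤ L_f * ‖x₁ - x₂‖)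
    (S : ℝ → Set (EuclideanSpace ℝ (Fin n)))
    (hS : ∀ t, (S t).Nonempty ∧ IsClosed (S t) ∧ Convex ℝ (S t))
    (P : ℝ → EuclideanSpace ℝ (Fin n) → EuclideanSpace ℝ (Fin n))
    (hP : ∀ t x, P t x ∈ S t ∧ ∀ y ∈ S t, ‖x - P t x‖ ≤ ‖x - y‖)
    (lam nu M : ℝ) (hlam : 0 < lam) (hnu : 0 < nu)
    (xlam xnu : ℝ → EuclideanSpace ℝ (Fin n))
    (hlam_ode : ∀ t ∈ Set.Icc 0 T, HasDerivAt xlam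
      (f t (xlam t) - (1 / lam) • (xlam t - P t (xlam t))) t)
    (hnu_ode : ∀ t ∈ Set.Icc 0 T, HasDerivAt xnu
      (f t (xnu t) - (1 / nu) • (xnu t - P t (xnu t))) t)
    (hYlam : ∀ t ∈ Set.Icc 0 T, ‖(1 / lam) • (xlam t - P t (xlam t))‖ ≤ M)
    (hYnu : ∀ t ∈ Set.Icc 0 T, ‖(1 / nu) • (xnu t - P t (xnu t))‖ ≤ M)
    (h0 : xlam 0 = xnu 0) :
    ∀ t ∈ Set.Icc 0 T,
      ‖xlam t - xnu t‖ ^ 2 ≤ M ^ 2 * (lam + nu) * (Real.exp (2 * L_f * t) - 1) / (2 * L_f) := by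
  have hderiv : ∀ t ∈ Icc 0 T, HasDerivAt (fun s => xlam s - xnu s) _ t :=
    fun t ht => (hlam_ode t ht).sub (hnu_ode t ht)
  have hbound := norm_sq_le_gronwallBound_of_inner_deriv_right_le (δ := 0)
    (fun t ht => (hderiv t ht).continuousAt.continuousWithinAt)
    (fun t ht => (hderiv t (Ico_subset_Icc_self ht)).hasDerivWithinAt) (by simp [h0])
    fun t ht => have ht' := Ico_subset_Icc_self ht
      inner_sub_regularized_field_sub_le (hS t).2.2 (hf_lip t) (hP t _).1 (hP t _).2
        (hP t _).1 (hP t _).2 hlam hnu (hYlam t ht') (hYnu t ht')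
  intro t ht
  calc ‖xlam t - xnu t‖ ^ 2 ≤ gronwallBound 0 (2 * L_f) (M ^ 2 * (lam + nu)) (t - 0) :=
        hbound t ht
    _ = M ^ 2 * (lam + nu) * (Real.exp (2 * L_f * t) - 1) / (2 * L_f) := by
      rw [gronwallBound_of_K_ne_0 (by positivity)]
      simp only [sub_zero, zero_mul, zero_add]
      ring

/-- quantitative comparison of two Moreau–Yosida regularized trajectories
with parameters `λ` and `ν` and the same initial condition. -/
theorem regularized_trajectories_dist {n : ℕ}
    (T L_f L_s : ℝ) (hT : 0 < T) (hLf : 0 < L_f) (hLs : 0 ≤ L_s)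
    (f : ℝ → EuclideanSpace ℝ (Fin n) → EuclideanSpace ℝ (Fin n))
    (hf_lip : ∀ t x₁ x₂, ‖f t x₁ - f t x₂‖ ≤ L_f * ‖x₁ - x₂‖)
    (hf_growth : ∀ t x, ‖f t x‖ ≤ L_f * (1 + ‖x‖))
    (S : ℝ → Set (EuclideanSpace ℝ (Fin n)))
    (hS : ∀ t, (S t).Nonempty ∧ IsClosed (S t) ∧ Convex ℝ (S t))
    (hH : ∀ t s, EMetric.hausdorffEdist (S t) (S s) ≤ ENNReal.ofReal (L_s * |t - s|))
    (P : ℝ → EuclideanSpace ℝ (Fin n) → EuclideanSpace ℝ (Fin n))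
    (hP : ∀ t x, P t x ∈ S t ∧ ∀ y ∈ S t, ‖x - P t x‖ ≤ ‖x - y‖)
    (lam nu M : ℝ) (hlam : 0 < lam) (hnu : 0 < nu) (hM : 0 ≤ M)
    (xlam xnu : ℝ → EuclideanSpace ℝ (Fin n))
    (hlam_ode : ∀ t ∈ Set.Icc 0 T, HasDerivAt xlam
      (f t (xlam t) - (1 / lam) • (xlam t - P t (xlam t))) t)
    (hnu_ode : ∀ t ∈ Set.Icc 0 T, HasDerivAt xnu
      (f t (xnu t) - (1 / nu) • (xnu t - P t (xnu t))) t)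
    (hYlam : ∀ t ∈ Set.Icc 0 T, ‖(1 / lam) • (xlam t - P t (xlam t))‖ ≤ M)
    (hYnu : ∀ t ∈ Set.Icc 0 T, ‖(1 / nu) • (xnu t - P t (xnu t))‖ ≤ M)
    (h0 : xlam 0 = xnu 0) :
    ∀ t ∈ Set.Icc 0 T,
      ‖xlam t - xnu t‖ ^ 2 ≤ M ^ 2 * (lam + nu) * (Real.exp (2 * L_f * t) - 1) / (2 * L_f) :=
  regularized_trajectories_dist_general T L_f hLf f hf_lip S hS P hP lam nu M hlam hnu xlam xnu
    hlam_ode hnu_ode hYlam hYnu h0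
end

section
/- Let f : [0,T] × ℝⁿ → ℝⁿ satisfy |f(t,x)| ≤ L_f(1 + |x|), let S_k ⊆ ℝⁿ (k = 0,…,N) be nonempty closed convex sets with d_H(S_k, S_{k+1}) ≤ L_s τ, and define the catching-up iterates x_{k+1} = P_{S_{k+1}}(x_k + τ f(kτ, x_k)) with x₀ ∈ S₀ and Nτ = T. Then there exist constants C₁, C₂ > 0 depending only on L_f, L_s, T (not on k, τ) such that |x_k| ≤ C₁ |x₀| + C₂ for all k ≤ N. -/
/-- uniform bound on the catching-up iterates, with constants depending
only on `L_f`, `L_s`, `T` (not on the dimension, the step `τ`, the index `k`, or the data). -/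
theorem catching_up_uniform_bound (L_f L_s T : ℝ)
    (hLf : 0 < L_f) (hLs : 0 ≤ L_s) (hT : 0 < T) :
    ∃ C₁ C₂ : ℝ, 0 < C₁ ∧ 0 < C₂ ∧
      ∀ (n N : ℕ) (τ : ℝ), 0 < τ → (N : ℝ) * τ = T →
      ∀ (S : ℕ → Set (EuclideanSpace ℝ (Fin n)))
        (f : ℝ → EuclideanSpace ℝ (Fin n) → EuclideanSpace ℝ (Fin n))
        (P : ℕ → EuclideanSpace ℝ (Fin n) → EuclideanSpace ℝ (Fin n))
        (x : ℕ → EuclideanSpace ℝ (Fin n)),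
        (∀ k, (S k).Nonempty ∧ IsClosed (S k) ∧ Convex ℝ (S k)) →
        (∀ t y, ‖f t y‖ ≤ L_f * (1 + ‖y‖)) →
        (∀ k, EMetric.hausdorffEdist (S k) (S (k + 1)) ≤ ENNReal.ofReal (L_s * τ)) →
        (∀ k y, P k y ∈ S k ∧ ∀ z ∈ S k, ‖y - P k y‖ ≤ ‖y - z‖) →
        x 0 ∈ S 0 →
        (∀ k, x (k + 1) = P (k + 1) (x k + τ • f ((k : ℝ) * τ) (x k))) →
        ∀ k ≤ N, ‖x k‖ ≤ C₁ * ‖x 0‖ + C₂ := by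
  refine ⟨Real.exp (2 * L_f * T), Real.exp (2 * L_f * T) * (T * (2 * L_f + L_s)) + 1,
    Real.exp_pos _, by positivity, ?_⟩
  intro n N τ hτ hNT S f P x hS hf hH hP hx0 hrec
  set a : ℝ := 2 * τ * L_f with ha
  set c : ℝ := τ * (2 * L_f + L_s) with hc
  have ha0 : 0 ≤ a := by positivity
  have hc0 : 0 ≤ c := by positivity
  have key : ∀ k, x k ∈ S k ∧
      ‖x k‖ ≤ (1 + a) ^ k * ‖x 0‖ + (k : ℝ) * c * (1 + a) ^ k := by
    intro k
    induction k with
    | zero => simpa using hx0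
    | succ k ih =>
      obtain ⟨hmem, hb⟩ := ih
      obtain ⟨hne, hcl, -⟩ := hS (k + 1)
      obtain ⟨z, hz, hdz⟩ := hcl.exists_infDist_eq_dist hne (x k)
      have hzb : dist (x k) z ≤ L_s * τ := by
        rw [← hdz]
        refine ENNReal.toReal_le_of_le_ofReal (by positivity) ?_
        exact le_trans (EMetric.infEdist_le_hausdorffEdist_of_mem hmem) (hH k)
      set y : EuclideanSpace ℝ (Fin n) := x k + τ • f ((k : ℝ) * τ) (x k) with hy
      have hx1 : x (k + 1) = P (k + 1) y := hrec k
      have hPmem := (hP (k + 1) y).1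
      have hPle := (hP (k + 1) y).2 z hz
      have hfb : ‖f ((k : ℝ) * τ) (x k)‖ ≤ L_f * (1 + ‖x k‖) := hf _ _
      have hyb : ‖y‖ ≤ ‖x k‖ + τ * (L_f * (1 + ‖x k‖)) := by
        calc ‖y‖ ≤ ‖x k‖ + ‖τ • f ((k : ℝ) * τ) (x k)‖ := norm_add_le _ _
        _ ≤ ‖x k‖ + τ * (L_f * (1 + ‖x k‖)) := by
            rw [norm_smul, Real.norm_of_nonneg hτ.le]
            nlinarith
      have hyz : ‖y - z‖ ≤ L_s * τ + τ * (L_f * (1 + ‖x k‖)) := by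
        have : y - z = (x k - z) + τ • f ((k : ℝ) * τ) (x k) := by
          rw [hy]; abel
        rw [this]
        calc ‖(x k - z) + τ • f ((k : ℝ) * τ) (x k)‖
            ≤ ‖x k - z‖ + ‖τ • f ((k : ℝ) * τ) (x k)‖ := norm_add_le _ _
          _ ≤ L_s * τ + τ * (L_f * (1 + ‖x k‖)) := by
              rw [norm_smul, Real.norm_of_nonneg hτ.le]
              have := hzb
              rw [dist_eq_norm] at this
              nlinarith
      have hstep : ‖x (k + 1)‖ ≤ (1 + a) * ‖x k‖ + c := by
        have h1 : ‖x (k + 1)‖ ≤ ‖x (k + 1) - y‖ + ‖y‖ := by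
          have := norm_add_le (x (k + 1) - y) y
          simpa using this
        have h2 : ‖x (k + 1) - y‖ = ‖y - P (k + 1) y‖ := by
          rw [hx1, norm_sub_rev]
        calc ‖x (k + 1)‖ ≤ ‖y - P (k + 1) y‖ + ‖y‖ := by rw [← h2]; exact h1
          _ ≤ ‖y - z‖ + ‖y‖ := by linarith [hPle]
          _ ≤ (1 + a) * ‖x k‖ + c := by rw [ha, hc]; nlinarith
      constructor
      · rw [hx1]; exact hPmem
      · have hp1 : (1 : ℝ) ≤ (1 + a) ^ k := one_le_pow₀ (by linarith)
        have hps : (1 + a) ^ (k + 1) = (1 + a) ^ k * (1 + a) := pow_succ _ _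
        have hmul : (1 + a) * ‖x k‖ ≤
            (1 + a) * ((1 + a) ^ k * ‖x 0‖ + (k : ℝ) * c * (1 + a) ^ k) :=
          mul_le_mul_of_nonneg_left hb (by linarith)
        have hcc : c ≤ c * ((1 + a) ^ k * (1 + a)) :=
          le_mul_of_one_le_right hc0 (by nlinarith)
        push_cast
        rw [hps]
        linarith
  intro k hk
  obtain ⟨-, hb⟩ := key k
  have hp : (0:ℝ) < 1 + a := by linarith
  have hmono : (1 + a) ^ k ≤ (1 + a) ^ N := pow_le_pow_right₀ (by linarith) hk
  have hexp : (1 + a) ^ N ≤ Real.exp (2 * L_f * T) := by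
    calc (1 + a) ^ N ≤ Real.exp a ^ N := by
          apply pow_le_pow_left₀ (by linarith)
          linarith [Real.add_one_le_exp a]
      _ = Real.exp ((N : ℝ) * a) := by rw [← Real.exp_nat_mul]
      _ = Real.exp (2 * L_f * T) := by
          rw [ha, ← hNT]; ring_nf
  have hkc : (k : ℝ) * c ≤ T * (2 * L_f + L_s) := by
    have : (k : ℝ) ≤ (N : ℝ) := Nat.cast_le.mpr hk
    rw [hc, ← hNT]
    nlinarith
  have hp0 : (0:ℝ) ≤ (1 + a) ^ k := by positivity
  have hE : (1 + a) ^ k ≤ Real.exp (2 * L_f * T) := le_trans hmono hexp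
  have hx0nn : (0:ℝ) ≤ ‖x 0‖ := norm_nonneg _
  have hkc0 : (0:ℝ) ≤ (k : ℝ) * c := by positivity
  have h1 : (1 + a) ^ k * ‖x 0‖ ≤ Real.exp (2 * L_f * T) * ‖x 0‖ :=
    mul_le_mul_of_nonneg_right hE hx0nn
  have h2 : (k : ℝ) * c * (1 + a) ^ k ≤ T * (2 * L_f + L_s) * Real.exp (2 * L_f * T) :=
    mul_le_mul hkc hE hp0 (by positivity)
  linarith
end
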